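/- arXiv:1706.04396 — 2 statements merged into one kernel-verified Lean document; each statement's English description precedes it below -/
import Mathlib

section
/- Let I = [0,1], let ℚ be the rationals in I, and consider the subspace E = I² ∖ ℚ² of the square. Then F₀(E) is not Souslin in the Effros Borel space (F(E), 𝓑_{F(E)}). -/
/-!
Every `x : ℕ → ℕ` codes a tree `T_x` of finite sequences, and `{x | T_x has no branch}` is not
analytic (a diagonal argument against the tree representation of analytic sets). Nodes `v` of
`ℕ^{<ℕ}` are assigned nested rational intervals: the `k`-th child of `v` sits within `2^{-(k+1)}`
of the left end of the interval of `v`, and every node of depth `n + 1` misses the `n`-th rational.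
Let `K_x` be `{0}` together with the closure of the left ends of the nodes of `T_x`. Then `K_x`
contains an irrational exactly when `T_x` has a branch: along a branch the left ends converge to a
point that avoids every rational, and an irrational limit of left ends is approached through one
child at each level. The closed set `{(t, y) ∈ E | t ∈ K_x}` is zero-dimensional when `K_x ⊆ ℚ`
(it embeds in `ℚ × (ℝ ∖ ℚ)`) and contains a vertical segment otherwise. The map
`x ↦ {(t, y) ∈ E | t ∈ K_x}` is Borel for the Effros structure and pulls `F₀(E)` back to the
non-analytic set, while the Souslin operation applied to Borel sets only produces analytic sets.
-/

open Set Topology TopologicalSpace MeasureTheory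

/-- The Effros Borel structure on the collection of closed subsets of `X`. -/
def effrosSigma (X : Type*) [TopologicalSpace X] :
    MeasurableSpace {A : Set X // IsClosed A} :=
  MeasurableSpace.generateFrom
    {𝓤 : Set {A : Set X // IsClosed A} |
      ∃ U : Set X, IsOpen U ∧ 𝓤 = {A : {A : Set X // IsClosed A} | ((A : Set X) ∩ U).Nonempty}}

/-- `𝓐` is the result of the Souslin operation applied to `m`-measurable sets. -/
def IsSouslinIn {α : Type*} (m : MeasurableSpace α) (𝓐 : Set α) : Prop :=
  ∃ f : List ℕ → Set α, (∀ s, MeasurableSet[m] (f s)) ∧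
    𝓐 = ⋃ σ : ℕ → ℕ, ⋂ n : ℕ, f (List.ofFn fun i : Fin n => σ i)

/-- dim X ≤ 0 : `X` has a base consisting of clopen sets (or is empty). -/
def ZeroDimensional (X : Type*) [TopologicalSpace X] : Prop :=
  ∃ B : Set (Set X), (∀ s ∈ B, IsClopen s) ∧ IsTopologicalBasis B

/-- Every point of `S` is isolated in the subspace `S`. -/
def RelativelyDiscrete {E : Type*} [TopologicalSpace E] (S : Set E) : Prop :=
  ∀ x ∈ S, ∃ U : Set E, IsOpen U ∧ U ∩ S = {x}

/-- countable union of zero-dimensional subspaces -/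
def CountableDimensional (X : Type*) [TopologicalSpace X] : Prop :=
  ∃ C : ℕ → Set X, (⋃ n, C n) = univ ∧ ∀ n, ZeroDimensional (C n)

/-- F₀(X): nonempty zero-dimensional closed sets -/
def zeroDimClosedSets (X : Type*) [TopologicalSpace X] :
    Set {A : Set X // IsClosed A} :=
  {A | (A : Set X).Nonempty ∧ ZeroDimensional (A : Set X)}

/-- The Vietoris topology on the collection of closed subsets of `X`. -/
def vietoris (X : Type*) [TopologicalSpace X] :
    TopologicalSpace {A : Set X // IsClosed A} :=
  TopologicalSpace.generateFrom
    ({𝓤 | ∃ U : Set X, IsOpen U ∧ 𝓤 = {A : {A : Set X // IsClosed A} | (A : Set X) ⊆ U}} ∪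
     {𝓤 | ∃ U : Set X, IsOpen U ∧
        𝓤 = {A : {A : Set X // IsClosed A} | ((A : Set X) ∩ U).Nonempty}})

/-- The Wijsman topology on nonempty closed subsets of a metric space. -/
noncomputable def wijsman (E : Type*) [MetricSpace E] :
    TopologicalSpace {A : Set E // IsClosed A ∧ A.Nonempty} :=
  ⨅ z : E, TopologicalSpace.induced (fun A => Metric.infDist z (A : Set E)) inferInstance

/-- The square `I² = [0,1]²` minus the rational points `ℚ²`. -/
def squareMinusRatSq : Set (ℝ × ℝ) :=
  (Icc (0:ℝ) 1 ×ˢ Icc (0:ℝ) 1) \ {p | ¬ Irrational p.1 ∧ ¬ Irrational p.2}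

open PiNat Encodable

section Souslin

variable {X : Type*} [TopologicalSpace X]

theorem MeasureTheory.AnalyticSet.souslin [PolishSpace X] {f : List ℕ → Set X}
    (hf : ∀ s, AnalyticSet (f s)) :
    AnalyticSet (⋃ σ : ℕ → ℕ, ⋂ n, f (List.ofFn fun i : Fin n => σ i)) := by
  have hlevel (n : ℕ) :
      AnalyticSet {p : (ℕ → ℕ) × X | p.2 ∈ f (List.ofFn fun i : Fin n => p.1 i)} := by
    have hD : AnalyticSet (⋃ g : Fin n → ℕ, Prod.mk g '' f (List.ofFn g)) :=
      AnalyticSet.iUnion fun g => (hf _).image_of_continuous (Continuous.prodMk_right g)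
    convert hD.preimage (f := fun p : (ℕ → ℕ) × X => ((fun i : Fin n => p.1 i), p.2))
      (by fun_prop) using 1
    ext p
    simp
  convert (AnalyticSet.iInter hlevel).image_of_continuous continuous_snd using 1
  ext x
  simp

theorem IsSouslinIn.analyticSet_preimage [PolishSpace X] [MeasurableSpace X] [BorelSpace X]
    {α : Type*} {m : MeasurableSpace α} {𝓐 : Set α} (h𝓐 : IsSouslinIn m 𝓐) {g : X → α}
    (hg : Measurable g) : AnalyticSet (g ⁻¹' 𝓐) := by
  obtain ⟨f, hf, rfl⟩ := h𝓐
  simp only [preimage_iUnion, preimage_iInter]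
  exact AnalyticSet.souslin fun s => (hg (hf s)).analyticSet

end Souslin

theorem PiNat.tendsto_of_res_eq {α : Type*} [TopologicalSpace α] {y : ℕ → ℕ → α} {x : ℕ → α}
    (h : ∀ n, res (y n) n = res x n) : Filter.Tendsto y Filter.atTop (𝓝 x) := by
  refine tendsto_pi_nhds.2 fun i => tendsto_const_nhds.congr' ?_
  filter_upwards [Filter.eventually_gt_atTop i] with n hn
  exact (res_eq_res.1 (h n) hn).symm

theorem PiNat.eq_res_length_of_suffix {α : Type*} {z : ℕ → α} {w : List α} :
    ∀ {n}, w <:+ res z n → w = res z w.length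
  | 0, h => by simp_all [List.suffix_nil]
  | n + 1, h => by
    rw [res_succ] at h
    rcases List.suffix_cons_iff.1 h with rfl | h
    · rw [List.length_cons, res_length, res_succ]
    · exact eq_res_length_of_suffix h

theorem PiNat.res_suffix_res {α : Type*} (z : ℕ → α) {m n : ℕ} (h : m ≤ n) :
    res z m <:+ res z n := by
  induction n, h using Nat.le_induction with
  | base => exact List.suffix_refl _
  | succ n _ ih => exact ih.trans (res_succ z n ▸ List.suffix_cons _ _)

theorem PiNat.exists_forall_res_of_forall_exists_cons {α : Type*} {P : List α → Prop}
    (h0 : P []) (h : ∀ u, P u → ∃ a, P (a :: u)) : ∃ z : ℕ → α, ∀ n, P (res z n) := by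
  choose f hf using h
  let s : ℕ → {u // P u} := fun n => n.rec ⟨[], h0⟩ fun _ s => ⟨f s.1 s.2 :: s.1, hf _ _⟩
  have hres : ∀ n, res (fun n => f (s n).1 (s n).2) n = (s n).1 := by
    intro n
    induction n with
    | zero => rfl
    | succ n ih => rw [res_succ, ih]
  exact ⟨_, fun n => hres n ▸ (s n).2⟩

theorem PiNat.isLocallyConstant_apply_res (g : List ℕ → ℕ) (m : ℕ) :
    IsLocallyConstant fun x : ℕ → ℕ => x (g (res x m)) := by
  refine (IsLocallyConstant.iff_eventually_eq _).2 fun x => ?_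
  set N := max m (g (res x m) + 1)
  filter_upwards [(isOpen_cylinder _ x N).mem_nhds (self_mem_cylinder x N)] with y hy
  rw [mem_cylinder_iff] at hy
  rw [res_eq_res.2 fun i hi => hy i (by omega)]
  exact hy _ (by omega)

theorem List.IsSuffix.eq_or_cons_suffix {α : Type*} {u : List α} :
    ∀ {v}, u <:+ v → u = v ∨ ∃ a, a :: u <:+ v
  | [], h => .inl (List.suffix_nil.1 h)
  | b :: v, h => by
    rcases List.suffix_cons_iff.1 h with rfl | h
    · exact .inl rfl
    rcases h.eq_or_cons_suffix with rfl | ⟨a, ha⟩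
    · exact .inr ⟨b, List.suffix_refl _⟩
    · exact .inr ⟨a, ha.trans (List.suffix_cons _ _)⟩

theorem MeasureTheory.AnalyticSet.exists_eq_setOf_res {A : Set (ℕ → ℕ)} (hA : AnalyticSet A) :
    ∃ R : List ℕ → List ℕ → Prop, A = {x | ∃ z, ∀ n, R (res x n) (res z n)} := by
  rw [AnalyticSet] at hA
  rcases hA with rfl | ⟨f, hf, rfl⟩
  · exact ⟨fun _ _ => False, by simp⟩
  refine ⟨fun u w => ∃ y, res y w.length = w ∧ res (f y) u.length = u, ?_⟩
  ext x
  simp only [mem_range, mem_ofPred_eq, res_length]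
  constructor
  · rintro ⟨z, rfl⟩
    exact ⟨z, fun n => ⟨z, rfl, rfl⟩⟩
  · rintro ⟨z, hz⟩
    choose y hyz hyx using hz
    exact ⟨z, tendsto_nhds_unique ((hf.tendsto z).comp (tendsto_of_res_eq hyz))
      (tendsto_of_res_eq hyx)⟩

/-- The complement of the diagonal of the universal analytic set: `x` codes the relation
`fun u w => x (encode (u, w)) = 1` on pairs of finite sequences. -/
def diagSet : Set (ℕ → ℕ) := {x | ¬ ∃ z : ℕ → ℕ, ∀ n, x (encode (res x n, res z n)) = 1}

open Classical in
theorem not_analyticSet_diagSet : ¬ AnalyticSet diagSet := by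
  intro h
  obtain ⟨R, hR⟩ := h.exists_eq_setOf_res
  let y : ℕ → ℕ := fun c => if ∃ p : List ℕ × List ℕ, encode p = c ∧ R p.1 p.2 then 1 else 0
  have hy (u w : List ℕ) : y (encode (u, w)) = 1 ↔ R u w := by simp [y]
  have := Set.ext_iff.1 hR y
  simp only [diagSet, mem_ofPred_eq, hy] at this
  exact (iff_not_self this.symm).elim

def codedTree (x : ℕ → ℕ) : Set (List ℕ) :=
  {w | ∀ w', w' <:+ w → x (encode (res x w'.length, w')) = 1}

theorem codedTree_of_suffix {x : ℕ → ℕ} {w w' : List ℕ} (hw : w ∈ codedTree x) (h : w' <:+ w) :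
    w' ∈ codedTree x :=
  fun _ h' => hw _ (h'.trans h)

theorem exists_branch_codedTree_iff (x : ℕ → ℕ) :
    (∃ z : ℕ → ℕ, ∀ n, res z n ∈ codedTree x) ↔ x ∉ diagSet := by
  simp only [diagSet, mem_ofPred_eq, not_not]
  refine exists_congr fun z => ⟨fun h n => by simpa using h n _ (List.suffix_refl _),
    fun h n w hw => ?_⟩
  rw [eq_res_length_of_suffix hw, res_length]
  exact h _

theorem measurableSet_mem_codedTree (w : List ℕ) : MeasurableSet {x | w ∈ codedTree x} :=
  Measurable.setOf <| Measurable.forall fun w' => measurable_const.imp <|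
    ((isLocallyConstant_apply_res (fun u => encode (u, w')) _).continuous.measurable).eq_const 1

/-- With `a = I.1` and `t = (I.2 - I.1) / 2^(k+3)`, the two candidates `[a+t, a+2t]` and
`[a+3t, a+4t]` are disjoint, so one of them misses `r`. -/
def childInterval (I : ℚ × ℚ) (r : ℚ) (k : ℕ) : ℚ × ℚ :=
  let t := (I.2 - I.1) / 2 ^ (k + 3)
  if r ∈ Icc (I.1 + t) (I.1 + 2 * t) then (I.1 + 3 * t, I.1 + 4 * t) else (I.1 + t, I.1 + 2 * t)

theorem childInterval_spec {I : ℚ × ℚ} (hI : I.1 < I.2) (r : ℚ) (k : ℕ) :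
    I.1 < (childInterval I r k).1 ∧ (childInterval I r k).1 < (childInterval I r k).2 ∧
      (childInterval I r k).2 ≤ I.1 + (I.2 - I.1) / 2 ^ (k + 1) ∧
      r ∉ Icc (childInterval I r k).1 (childInterval I r k).2 := by
  dsimp only [childInterval]
  set t := (I.2 - I.1) / 2 ^ (k + 3)
  have ht : 0 < t := div_pos (sub_pos.2 hI) (by positivity)
  have h4t : 4 * t = (I.2 - I.1) / 2 ^ (k + 1) := by
    simp only [t, pow_add]; ring
  split_ifs with hr
  · refine ⟨by linarith, by linarith, by linarith, fun h => ?_⟩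
    linarith [hr.2, h.1]
  · exact ⟨by linarith, by linarith, by linarith, hr⟩

/-- Nodes are stored reversed, as in `PiNat.res`: `k :: v` is the `k`-th child of `v`. -/
def nodeInterval : List ℕ → ℚ × ℚ
  | [] => (0, 1)
  | k :: v => childInterval (nodeInterval v) (Denumerable.ofNat ℚ v.length) k

theorem nodeInterval_fst_lt_snd : ∀ v, (nodeInterval v).1 < (nodeInterval v).2
  | [] => by simp [nodeInterval]
  | _ :: v => (childInterval_spec (nodeInterval_fst_lt_snd v) _ _).2.1

theorem nodeInterval_mono_of_suffix {u : List ℕ} :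
    ∀ {v}, u <:+ v →
      (nodeInterval u).1 ≤ (nodeInterval v).1 ∧ (nodeInterval v).2 ≤ (nodeInterval u).2
  | [], h => by simp_all [List.suffix_nil]
  | k :: v, h => by
    rcases List.suffix_cons_iff.1 h with rfl | h
    · exact ⟨le_rfl, le_rfl⟩
    obtain ⟨h1, h2⟩ := nodeInterval_mono_of_suffix h
    have hv := nodeInterval_fst_lt_snd v
    obtain ⟨c1, -, c3, -⟩ := childInterval_spec hv (Denumerable.ofNat ℚ v.length) k
    have : ((nodeInterval v).2 - (nodeInterval v).1) / 2 ^ (k + 1)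
        ≤ (nodeInterval v).2 - (nodeInterval v).1 :=
      div_le_self (by linarith) (one_le_pow₀ one_le_two)
    simp only [nodeInterval]
    exact ⟨h1.trans c1.le, by linarith⟩

theorem nodeInterval_subset_unit (v : List ℕ) :
    0 ≤ (nodeInterval v).1 ∧ (nodeInterval v).2 ≤ 1 :=
  nodeInterval_mono_of_suffix List.nil_suffix

theorem nodeInterval_fst_le_of_cons_suffix {u v : List ℕ} {k : ℕ} (h : k :: u <:+ v) :
    (nodeInterval v).1 ≤ (nodeInterval u).1 + (1 / 2) ^ (k + 1) := by
  obtain ⟨-, c1, c3, -⟩ := childInterval_spec (nodeInterval_fst_lt_snd u)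
    (Denumerable.ofNat ℚ u.length) k
  have hv := (nodeInterval_fst_lt_snd v).le
  have hkv := (nodeInterval_mono_of_suffix h).2
  have hu := nodeInterval_subset_unit u
  have : ((nodeInterval u).2 - (nodeInterval u).1) / 2 ^ (k + 1) ≤ (1 / 2) ^ (k + 1) := by
    rw [one_div_pow]
    exact div_le_div_of_nonneg_right (by linarith) (by positivity)
  simp only [nodeInterval] at c3 hkv
  linarith

def leftEnds (T : Set (List ℕ)) : Set ℝ := (fun v => ((nodeInterval v).1 : ℝ)) '' T

section LeftEnds

variable {T : Set (List ℕ)}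

theorem leftEnds_subset_Icc (u : List ℕ) :
    leftEnds {v ∈ T | u <:+ v} ⊆ Icc ((nodeInterval u).1 : ℝ) (nodeInterval u).2 := by
  rintro _ ⟨v, ⟨-, huv⟩, rfl⟩
  dsimp only
  have := nodeInterval_mono_of_suffix huv
  have := (nodeInterval_fst_lt_snd v).le
  constructor <;> norm_cast <;> linarith

theorem leftEnds_suffix_subset (u : List ℕ) (K : ℕ) :
    leftEnds {v ∈ T | u <:+ v} ⊆ (⋃ k ∈ Finset.range K, leftEnds {v ∈ T | k :: u <:+ v}) ∪
      Icc ((nodeInterval u).1 : ℝ) ((nodeInterval u).1 + (1 / 2) ^ (K + 1)) := by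
  rintro _ ⟨v, ⟨hvT, huv⟩, rfl⟩
  dsimp only
  rcases huv.eq_or_cons_suffix with rfl | ⟨k, hkv⟩
  · exact .inr ⟨le_rfl, by simp⟩
  by_cases hk : k < K
  · exact .inl (mem_biUnion (Finset.mem_range.2 hk) ⟨v, ⟨hvT, hkv⟩, rfl⟩)
  refine .inr ⟨by exact_mod_cast (nodeInterval_mono_of_suffix huv).1, ?_⟩
  have h := nodeInterval_fst_le_of_cons_suffix hkv
  have : ((1 : ℝ) / 2) ^ (k + 1) ≤ (1 / 2) ^ (K + 1) :=
    pow_le_pow_of_le_one (by norm_num) (by norm_num) (by omega)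
  have := (Rat.cast_le (K := ℝ)).2 h
  push_cast at this
  linarith

theorem exists_mem_closure_leftEnds_cons {p : ℝ} (hp : Irrational p) {u : List ℕ}
    (hu : p ∈ closure (leftEnds {v ∈ T | u <:+ v})) :
    ∃ k, p ∈ closure (leftEnds {v ∈ T | k :: u <:+ v}) := by
  have hpu := closure_minimal (leftEnds_subset_Icc u) isClosed_Icc hu
  have hlt : ((nodeInterval u).1 : ℝ) < p := hpu.1.lt_of_ne (hp.ne_rat _).symm
  obtain ⟨K, hK⟩ := exists_pow_lt_of_lt_one (sub_pos.2 hlt) (by norm_num : (1 / 2 : ℝ) < 1)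
  have := closure_mono (leftEnds_suffix_subset u K) hu
  rw [closure_union, Finset.closure_biUnion, closure_Icc] at this
  rcases this with hk | hK'
  · obtain ⟨k, -, hk⟩ := mem_iUnion₂.1 hk
    exact ⟨k, hk⟩
  · have : ((1 : ℝ) / 2) ^ (K + 1) ≤ (1 / 2) ^ K :=
      pow_le_pow_of_le_one (by norm_num) (by norm_num) (by omega)
    linarith [hK'.2]

theorem exists_branch_of_irrational_mem_closure_leftEnds
    (hT : ∀ v ∈ T, ∀ w, w <:+ v → w ∈ T) {p : ℝ} (hp : p ∈ closure (leftEnds T))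
    (hirr : Irrational p) : ∃ z : ℕ → ℕ, ∀ n, res z n ∈ T := by
  obtain ⟨z, hz⟩ := exists_forall_res_of_forall_exists_cons
    (P := fun u => p ∈ closure (leftEnds {v ∈ T | u <:+ v}))
    (by simpa using hp) fun u => exists_mem_closure_leftEnds_cons hirr
  refine ⟨z, fun n => ?_⟩
  obtain ⟨_, ⟨v, ⟨hvT, hv⟩, rfl⟩⟩ := closure_nonempty_iff.1 ⟨p, hz n⟩
  exact hT v hvT _ hv

theorem exists_irrational_mem_closure_leftEnds_of_branch {z : ℕ → ℕ}
    (hz : ∀ n, res z n ∈ T) : ∃ p ∈ closure (leftEnds T), Irrational p := by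
  let a : ℕ → ℝ := fun n => (nodeInterval (res z n)).1
  let b : ℕ → ℝ := fun n => (nodeInterval (res z n)).2
  have hmono : ∀ {m n}, m ≤ n → a m ≤ a n ∧ b n ≤ b m := fun h => by
    have := nodeInterval_mono_of_suffix (res_suffix_res z h)
    simp only [a, b]
    exact ⟨by exact_mod_cast this.1, by exact_mod_cast this.2⟩
  have hab : ∀ m n, a n ≤ b m := fun m n => by
    have := (hmono (le_max_left n m)).1
    have := (hmono (le_max_right n m)).2
    have : a (max n m) ≤ b (max n m) := by
      simp only [a, b]; exact_mod_cast (nodeInterval_fst_lt_snd _).le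
    linarith
  have hbdd : BddAbove (range a) := ⟨b 0, by rintro _ ⟨n, rfl⟩; exact hab 0 n⟩
  have hlim := tendsto_atTop_ciSup (fun m n h => (hmono h).1) hbdd
  refine ⟨⨆ n, a n, mem_closure_of_tendsto hlim (.of_forall fun n => ⟨_, hz n, rfl⟩), ?_⟩
  rintro ⟨q, hq⟩
  obtain ⟨n, rfl⟩ : ∃ n, Denumerable.ofNat ℚ n = q := ⟨_, Denumerable.ofNat_encode q⟩
  have hmem : (Denumerable.ofNat ℚ n : ℝ) ∈ Icc (a (n + 1)) (b (n + 1)) :=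
    hq ▸ ⟨le_ciSup hbdd _, ciSup_le fun m => hab _ m⟩
  have := (childInterval_spec (nodeInterval_fst_lt_snd (res z n))
    (Denumerable.ofNat ℚ (res z n).length) (z n)).2.2.2
  simp only [a, b, res_succ, nodeInterval] at hmem
  rw [res_length] at this hmem
  exact this ⟨by exact_mod_cast hmem.1, by exact_mod_cast hmem.2⟩

end LeftEnds

section ZeroDimensional

variable {X Y : Type*} [TopologicalSpace X] [TopologicalSpace Y]

theorem ZeroDimensional.of_isInducing {f : X → Y} (hf : IsInducing f) (hY : ZeroDimensional Y) :
    ZeroDimensional X := by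
  obtain ⟨B, hB, hbasis⟩ := hY
  exact ⟨preimage f '' B, by rintro _ ⟨s, hs, rfl⟩; exact (hB s hs).preimage hf.continuous,
    hbasis.isInducing hf⟩

theorem ZeroDimensional.prod (hX : ZeroDimensional X) (hY : ZeroDimensional Y) :
    ZeroDimensional (X × Y) := by
  obtain ⟨B, hB, hBX⟩ := hX
  obtain ⟨C, hC, hCY⟩ := hY
  refine ⟨image2 (· ×ˢ ·) B C, ?_, hBX.prod hCY⟩
  rintro _ ⟨s, hs, t, ht, rfl⟩
  exact (hB s hs).prod (hC t ht)

theorem ZeroDimensional.totallyDisconnectedSpace [T0Space X] (hX : ZeroDimensional X) :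
    TotallyDisconnectedSpace X := by
  obtain ⟨B, hB, hbasis⟩ := hX
  have := totallySeparatedSpace_of_t0_of_basis_clopen
    (hbasis.of_isOpen_of_subset (fun _ hs => hs.isOpen) hB)
  infer_instance

theorem zeroDimensional_of_dense_compl {s : Set ℝ} (hs : Dense sᶜ) : ZeroDimensional s := by
  have hbasis : IsTopologicalBasis {I | ∃ a ∉ s, ∃ b ∉ s, I = Ioo a b} := by
    refine isTopologicalBasis_of_isOpen_of_nhds (by rintro _ ⟨a, -, b, -, rfl⟩; exact isOpen_Ioo)
      fun x u hx hu => ?_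
    obtain ⟨l, r, ⟨hl, hr⟩, hlr⟩ := mem_nhds_iff_exists_Ioo_subset.1 (hu.mem_nhds hx)
    obtain ⟨a, ha, hla, hax⟩ := hs.exists_between hl
    obtain ⟨b, hb, hxb, hbr⟩ := hs.exists_between hr
    exact ⟨_, ⟨a, ha, b, hb, rfl⟩, ⟨hax, hxb⟩, (Ioo_subset_Ioo hla.le hbr.le).trans hlr⟩
  refine ⟨_, ?_, hbasis.isInducing IsInducing.subtypeVal⟩
  rintro _ ⟨_, ⟨a, ha, b, hb, rfl⟩, rfl⟩
  refine ⟨?_, isOpen_Ioo.preimage continuous_subtype_val⟩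
  convert (isClosed_Icc (a := a) (b := b)).preimage continuous_subtype_val using 1
  ext ⟨x, hx⟩
  simp only [mem_preimage, mem_Ioo, mem_Icc]
  exact ⟨fun h => ⟨h.1.le, h.2.le⟩, fun h => ⟨h.1.lt_of_ne (by rintro rfl; exact ha hx),
    h.2.lt_of_ne (by rintro rfl; exact hb hx)⟩⟩

end ZeroDimensional

def columns (K : Set ℝ) : Set squareMinusRatSq := {p | (p : ℝ × ℝ).1 ∈ K}

section Columns

variable {K : Set ℝ}

theorem IsClosed.columns (hK : IsClosed K) : IsClosed (columns K) :=
  hK.preimage (continuous_fst.comp continuous_subtype_val)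

theorem zeroDimensional_columns (hK : ∀ t ∈ K, ¬ Irrational t) : ZeroDimensional (columns K) := by
  let f : columns K → {x : ℝ | ¬ Irrational x} × {y : ℝ | Irrational y} := fun p =>
    (⟨_, hK _ p.2⟩, ⟨_, not_not.1 fun h => p.1.2.2 ⟨hK _ p.2, h⟩⟩)
  have hf : IsInducing f :=
    .of_comp (g := fun q : {x : ℝ | ¬ Irrational x} × {y : ℝ | Irrational y} => (q.1.1, q.2.1))
      (by fun_prop) (by fun_prop) (IsInducing.subtypeVal.comp IsInducing.subtypeVal)
  refine .of_isInducing hf (.prod (zeroDimensional_of_dense_compl ?_)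
    (zeroDimensional_of_dense_compl ?_))
  · simpa only [compl_ofPred, not_not] using dense_irrational
  · convert Rat.denseRange_cast (𝕜 := ℝ) using 1
    simp only [Irrational, compl_ofPred, not_not, DenseRange, ofPred_mem_eq]

theorem not_zeroDimensional_columns (hK : K ⊆ Icc 0 1) {t : ℝ} (htK : t ∈ K)
    (ht : Irrational t) : ¬ ZeroDimensional (columns K) := by
  intro h
  have := h.totallyDisconnectedSpace
  have := Subtype.preconnectedSpace (isPreconnected_Icc (a := (0 : ℝ)) (b := 1))
  let γ : Icc (0 : ℝ) 1 → columns K := fun s => ⟨⟨(t, s), ⟨hK htK, s.2⟩, fun h => h.1 ht⟩, htK⟩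
  have hγ : Continuous γ := by fun_prop
  have := (isPreconnected_range hγ).subsingleton (mem_range_self ⟨0, by norm_num⟩)
    (mem_range_self ⟨1, by norm_num⟩)
  simp [γ] at this

theorem zeroDimensional_columns_iff (hK : K ⊆ Icc 0 1) :
    ZeroDimensional (columns K) ↔ ∀ t ∈ K, ¬ Irrational t :=
  ⟨fun h _ htK ht => not_zeroDimensional_columns hK htK ht h, zeroDimensional_columns⟩

theorem columns_nonempty (hK : K ⊆ Icc 0 1) (hne : K.Nonempty) : (columns K).Nonempty := by
  obtain ⟨t, ht⟩ := hne
  obtain ⟨y, hy, hy0, hy1⟩ := exists_irrational_btwn (zero_lt_one' ℝ)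
  exact ⟨⟨(t, y), ⟨hK ht, hy0.le, hy1.le⟩, fun h => h.2 hy⟩, ht⟩

theorem isOpen_setOf_exists_irrational_mem {V : Set (ℝ × ℝ)} (hV : IsOpen V) :
    IsOpen {t | ∃ y ∈ Ioo (0 : ℝ) 1, Irrational y ∧ (t, y) ∈ V} :=
  isOpen_iff_mem_nhds.2 fun _ ⟨y, hy, hyi, htV⟩ =>
    Filter.mem_of_superset ((hV.preimage (continuous_id.prodMk continuous_const)).mem_nhds htV)
      fun _ h => ⟨y, hy, hyi, h⟩

theorem columns_inter_nonempty_iff (hK : K ⊆ Icc 0 1) {V : Set (ℝ × ℝ)} (hV : IsOpen V) :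
    (columns K ∩ Subtype.val ⁻¹' V).Nonempty ↔
      (K ∩ {t | ∃ y ∈ Ioo (0 : ℝ) 1, Irrational y ∧ (t, y) ∈ V}).Nonempty := by
  constructor
  · rintro ⟨⟨⟨t, y⟩, hty⟩, htK, htyV⟩
    have hy : y ∈ Icc (0 : ℝ) 1 := hty.1.2
    have hslice : IsOpen ({y' | (t, y') ∈ V} ∩ Ioo 0 1) :=
      (hV.preimage (by fun_prop)).inter isOpen_Ioo
    have : ({y' | (t, y') ∈ V} ∩ Ioo 0 1).Nonempty := by
      rw [← closure_Ioo zero_ne_one] at hy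
      exact mem_closure_iff.1 hy _ (hV.preimage (by fun_prop)) htyV
    obtain ⟨y', ⟨hy'V, hy'⟩, hy'i⟩ := dense_irrational.inter_open_nonempty _ hslice this
    exact ⟨t, htK, y', hy', hy'i, hy'V⟩
  · rintro ⟨t, htK, y, hy, hyi, htyV⟩
    exact ⟨⟨(t, y), ⟨hK htK, hy.1.le, hy.2.le⟩, fun h => h.2 hyi⟩, htK, htyV⟩

end Columns

/-- `0` is added so that the set is never empty. -/
def codedSet (x : ℕ → ℕ) : Set ℝ := {0} ∪ closure (leftEnds (codedTree x))

theorem codedSet_subset_Icc (x : ℕ → ℕ) : codedSet x ⊆ Icc 0 1 := by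
  refine union_subset (by simp) (closure_minimal ?_ isClosed_Icc)
  simpa [nodeInterval] using leftEnds_subset_Icc (T := codedTree x) []

theorem forall_not_irrational_codedSet_iff (x : ℕ → ℕ) :
    (∀ t ∈ codedSet x, ¬ Irrational t) ↔ x ∈ diagSet := by
  rw [← not_iff_not, ← exists_branch_codedTree_iff]
  push Not
  constructor
  · rintro ⟨t, rfl | ht, hirr⟩
    · exact absurd ⟨0, by simp⟩ hirr
    · exact exists_branch_of_irrational_mem_closure_leftEnds
        (fun _ hv _ hw => codedTree_of_suffix hv hw) ht hirr
  · rintro ⟨z, hz⟩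
    obtain ⟨p, hp, hirr⟩ := exists_irrational_mem_closure_leftEnds_of_branch hz
    exact ⟨p, .inr hp, hirr⟩

def codedColumns (x : ℕ → ℕ) : {A : Set squareMinusRatSq // IsClosed A} :=
  ⟨columns (codedSet x), (isClosed_singleton.union isClosed_closure).columns⟩

theorem codedColumns_mem_zeroDimClosedSets_iff (x : ℕ → ℕ) :
    codedColumns x ∈ zeroDimClosedSets squareMinusRatSq ↔ x ∈ diagSet := by
  simp only [zeroDimClosedSets, mem_ofPred_eq, codedColumns,
    zeroDimensional_columns_iff (codedSet_subset_Icc x), forall_not_irrational_codedSet_iff,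
    and_iff_right_iff_imp]
  exact fun _ => columns_nonempty (codedSet_subset_Icc x) ⟨0, .inl rfl⟩

theorem measurable_codedColumns : Measurable[_, effrosSigma squareMinusRatSq] codedColumns := by
  refine measurable_generateFrom ?_
  rintro _ ⟨U, hU, rfl⟩
  obtain ⟨V, hV, rfl⟩ := isOpen_induced_iff.1 hU
  set W := {t | ∃ y ∈ Ioo (0 : ℝ) 1, Irrational y ∧ (t, y) ∈ V}
  have hW : IsOpen W := isOpen_setOf_exists_irrational_mem hV
  have : codedColumns ⁻¹' {A | ((A : Set squareMinusRatSq) ∩ Subtype.val ⁻¹' V).Nonempty} =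
      {x | 0 ∈ W ∨ ∃ v, v ∈ codedTree x ∧ ((nodeInterval v).1 : ℝ) ∈ W} := by
    ext x
    rw [mem_preimage, mem_ofPred_eq, mem_ofPred_eq, codedColumns,
      columns_inter_nonempty_iff (codedSet_subset_Icc x) hV, codedSet, union_inter_distrib_right,
      union_nonempty, singleton_inter_nonempty, closure_inter_open_nonempty_iff hW, leftEnds,
      image_inter_nonempty_iff]
    rfl
  rw [this]
  exact (measurable_const.or
    (.exists fun v => (measurableSet_mem_codedTree v).mem.and measurable_const)).setOf

theorem zeroDimClosedSets_not_souslin_square_minus_rationals :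
    ¬ IsSouslinIn (effrosSigma squareMinusRatSq)
      (zeroDimClosedSets squareMinusRatSq) := by
  intro h
  have hpre : codedColumns ⁻¹' zeroDimClosedSets squareMinusRatSq = diagSet :=
    ext codedColumns_mem_zeroDimClosedSets_iff
  exact not_analyticSet_diagSet (hpre ▸ h.analyticSet_preimage measurable_codedColumns)
end

section
/- (Hurewicz) Let I = [0,1] and let ℚ be the set of rationals in I. Every Souslin set in the Effros Borel space (F(I), 𝓑_{F(I)}) that contains all compact subsets of ℚ contains an element intersecting I ∖ ℚ. -/
open Set Topology TopologicalSpace MeasureTheory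

/-! Hurewicz's argument reduces the well-founded trees on `ℕ` to `𝓐`. Each node `s` carries a
rational interval `J s ⊆ [0, 1]` (`Hurewicz.schemeIcc`); the children `J (s ++ [a])` are nested
in `J s`, lie within `4⁻¹ ^ (a + 1)` of its left end, and avoid the `|s|`-th rational. Let `K T`
(`Hurewicz.treeClosure`) be the closure of the left ends of the intervals of the nodes of `T`.
A branch of `T` gives nested intervals shrinking to an irrational point of `K T`. If `T` is
well-founded, König's lemma shows that every limit of left ends of nodes of `T` is the left end
of one of them, so `K T ⊆ ℚ`. Since `T ↦ K T` is Effros measurable, if no member of `𝓐` met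
`I ∖ ℚ`, the well-founded trees would be the trees in the Souslin, hence analytic, set `K⁻¹ 𝓐`.
They are not: a projection of a closed subset of `(ℕ → Bool) × (ℕ → ℕ)` reduces continuously to
the ill-founded trees, and diagonalizing over codes of closed sets gives such a projection whose
complement is not analytic. -/

open Filter

-- Instance search does not find this on its own.
instance {ι : Type*} [Countable ι] : PolishSpace (ι → Bool) :=
  instPolishSpaceOfSeparableSpaceOfIsCompletelyMetrizableSpace

theorem MeasureTheory.AnalyticSet.inter {X : Type*} [TopologicalSpace X] [T2Space X]
    {s t : Set X} (hs : AnalyticSet s) (ht : AnalyticSet t) : AnalyticSet (s ∩ t) := by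
  rw [inter_eq_iInter]
  exact AnalyticSet.iInter fun b => by cases b <;> assumption

theorem MeasureTheory.AnalyticSet.exists_isClosed_eq_image_fst {X : Type*} [TopologicalSpace X]
    [T2Space X] {s : Set X} (hs : AnalyticSet s) :
    ∃ C : Set (X × (ℕ → ℕ)), IsClosed C ∧ s = Prod.fst '' C := by
  rw [AnalyticSet] at hs
  rcases hs with rfl | ⟨f, hf, rfl⟩
  · exact ⟨∅, isClosed_empty, (image_empty _).symm⟩
  · refine ⟨{p | f p.2 = p.1}, isClosed_eq (hf.comp continuous_snd) continuous_fst, ?_⟩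
    ext x
    simp

theorem IsSouslinIn.preimage {α β : Type*} {mα : MeasurableSpace α} {mβ : MeasurableSpace β}
    {f : β → α} (hf : Measurable[mβ, mα] f) {𝓐 : Set α} (h : IsSouslinIn mα 𝓐) :
    IsSouslinIn mβ (f ⁻¹' 𝓐) := by
  obtain ⟨g, hg, rfl⟩ := h
  exact ⟨fun s => f ⁻¹' g s, fun s => hf (hg s), by simp only [preimage_iUnion, preimage_iInter]⟩

theorem IsSouslinIn.analyticSet {X : Type*} [TopologicalSpace X] [PolishSpace X]
    [MeasurableSpace X] [BorelSpace X] {𝓐 : Set X} (h : IsSouslinIn ‹_› 𝓐) : AnalyticSet 𝓐 := by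
  obtain ⟨f, hf, rfl⟩ := h
  have hlevel : ∀ n, MeasurableSet
      {p : (ℕ → ℕ) × X | p.2 ∈ f (List.ofFn fun i : Fin n => p.1 i)} := by
    intro n
    have : {p : (ℕ → ℕ) × X | p.2 ∈ f (List.ofFn fun i : Fin n => p.1 i)} =
        ⋃ v : Fin n → ℕ, (fun p : (ℕ → ℕ) × X => fun i : Fin n => p.1 i) ⁻¹' {v} ∩
          Prod.snd ⁻¹' f (List.ofFn v) := by
      ext p
      simp
    rw [this]
    exact .iUnion fun v =>
      ((measurableSet_singleton v).preimage (by fun_prop)).inter ((hf _).preimage measurable_snd)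
  convert (MeasurableSet.iInter hlevel).analyticSet.image_of_continuous continuous_snd
  ext x
  simp

section Trees

def IsTree (T : List ℕ → Bool) : Prop := ∀ s a, T (s ++ [a]) = true → T s = true

def initSeg {α : Type*} (σ : ℕ → α) (n : ℕ) : List α := List.ofFn fun i : Fin n => σ i

def IllFounded (T : List ℕ → Bool) : Prop := ∃ σ : ℕ → ℕ, ∀ n, T (initSeg σ n) = true

variable {α : Type*} (σ : ℕ → α)

@[simp]
lemma length_initSeg (n : ℕ) : (initSeg σ n).length = n := by simp [initSeg]

lemma initSeg_succ (n : ℕ) : initSeg σ (n + 1) = initSeg σ n ++ [σ n] := by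
  rw [initSeg, List.ofFn_succ', List.concat_eq_append]
  simp [initSeg]

lemma initSeg_inj {τ : ℕ → α} {n : ℕ} : initSeg σ n = initSeg τ n ↔ ∀ i < n, σ i = τ i := by
  simp [initSeg, List.ofFn_inj, funext_iff, Fin.forall_iff]

lemma initSeg_prefix {m n : ℕ} (h : m ≤ n) : initSeg σ m <+: initSeg σ n := by
  induction n, h using Nat.le_induction with
  | base => exact List.prefix_refl _
  | succ n _ ih => exact ih.trans (by rw [initSeg_succ]; exact List.prefix_append _ _)

lemma IsTree.mem_of_prefix {T : List ℕ → Bool} (hT : IsTree T) {s t : List ℕ} (h : s <+: t)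
    (ht : T t = true) : T s = true := by
  induction t using List.reverseRecOn generalizing s with
  | nil => rwa [List.prefix_nil.1 h]
  | append_singleton t a ih =>
    rcases List.prefix_concat_iff.1 h with rfl | h
    · exact ht
    · exact ih h (hT t a ht)

lemma isClosed_setOf_isTree : IsClosed {T : List ℕ → Bool | IsTree T} := by
  have hclopen (s : List ℕ) : IsClopen {T : List ℕ → Bool | T s = true} :=
    (isClopen_discrete {true}).preimage (continuous_apply s)
  simp only [IsTree, ofPred_forall]
  exact isClosed_iInter fun s => isClosed_iInter fun a =>
    isClosed_imp (hclopen _).isOpen (hclopen s).isClosed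

lemma exists_forall_initSeg_mem {P : List ℕ → Prop} (h₀ : P [])
    (hstep : ∀ t, P t → ∃ a, P (t ++ [a])) : ∃ σ : ℕ → ℕ, ∀ n, P (initSeg σ n) := by
  choose! F hF using hstep
  let path (n : ℕ) : List ℕ := (fun t => t ++ [F t])^[n] []
  have hpath (n : ℕ) : path n = initSeg (fun m => F (path m)) n ∧ P (path n) := by
    induction n with
    | zero => exact ⟨rfl, h₀⟩
    | succ n ih =>
      simp only [path, Function.iterate_succ_apply'] at ih ⊢
      exact ⟨by rw [initSeg_succ, ← ih.1], hF _ ih.2⟩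
  exact ⟨_, fun n => (hpath n).1 ▸ (hpath n).2⟩

/-- König's lemma, applied to the nodes that are prefixes of infinitely many `s k`. -/
lemma IsTree.exists_infinite_finite {T : List ℕ → Bool} (hT : IsTree T) (hwf : ¬ IllFounded T)
    {s : ℕ → List ℕ} (hs : ∀ k, T (s k) = true) :
    ∃ t, {k | t <+: s k}.Infinite ∧ ∀ a, {k | t ++ [a] <+: s k}.Finite := by
  by_contra! h
  obtain ⟨σ, hσ⟩ := exists_forall_initSeg_mem (P := fun t => {k | t <+: s k}.Infinite)
    (by simpa using infinite_univ) h
  exact hwf ⟨σ, fun n => hT.mem_of_prefix (hσ n).nonempty.some_mem (hs _)⟩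

end Trees

section CodedClosed

variable {Z : Type*} [TopologicalSpace Z] {W : ℕ → Set Z}

def codedClosed (W : ℕ → Set Z) (y : ℕ → Bool) : Set Z := {z | ∀ n, y n = true → z ∉ W n}

lemma isClosed_setOf_mem_codedClosed (hW : ∀ n, IsOpen (W n)) :
    IsClosed {q : (ℕ → Bool) × Z | q.2 ∈ codedClosed W q.1} := by
  have hclopen (n : ℕ) : IsClopen {q : (ℕ → Bool) × Z | q.1 n = true} :=
    (isClopen_discrete {true}).preimage ((continuous_apply n).comp continuous_fst)
  show IsClosed {q : (ℕ → Bool) × Z | ∀ n, q.1 n = true → q.2 ∉ W n}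
  simp only [ofPred_forall]
  exact isClosed_iInter fun n =>
    isClosed_imp (hclopen n).isOpen ((hW n).isClosed_compl.preimage continuous_snd)

lemma exists_codedClosed_eq (hW : IsTopologicalBasis (range W)) {C : Set Z}
    (hC : IsClosed C) : ∃ y, codedClosed W y = C := by
  classical
  refine ⟨fun n => decide (W n ⊆ Cᶜ), Subset.antisymm (fun z hz => ?_) fun z hz n hn hzn => ?_⟩
  · by_contra hzC
    obtain ⟨_, ⟨n, rfl⟩, hzn, hnC⟩ := hW.exists_subset_of_mem_open hzC hC.isOpen_compl
    exact hz n (decide_eq_true hnC) hzn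
  · exact of_decide_eq_true hn hzn hz

end CodedClosed

/-- Diagonalization: the codes `y` run through all closed subsets of `(ℕ → Bool) × (ℕ → ℕ)`, and
`C` consists of the pairs `(y, σ)` lying in the set coded by `y`. -/
theorem exists_isClosed_not_analyticSet_compl_image_fst :
    ∃ C : Set ((ℕ → Bool) × (ℕ → ℕ)), IsClosed C ∧ ¬ AnalyticSet (Prod.fst '' C)ᶜ := by
  obtain ⟨W, hW⟩ := exists_seq_basis ((ℕ → Bool) × (ℕ → ℕ))
  have hWo (n : ℕ) : IsOpen (W n) := hW.isOpen ⟨n, rfl⟩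
  refine ⟨{p | p ∈ codedClosed W p.1},
    (isClosed_setOf_mem_codedClosed hWo).preimage (continuous_fst.prodMk continuous_id),
    fun hA => ?_⟩
  obtain ⟨C', hC', hEq⟩ := hA.exists_isClosed_eq_image_fst
  obtain ⟨y, rfl⟩ := exists_codedClosed_eq hW hC'
  have hy := congrArg (y ∈ ·) hEq
  simp only [mem_compl_iff, mem_image, mem_ofPred_eq, Prod.exists, exists_and_right,
    exists_eq_right, eq_iff_iff] at hy
  exact iff_not_self hy.symm

lemma tendsto_pi_of_forall_lt_eq {β : Type*} [TopologicalSpace β] {f : ℕ → ℕ → β} {g : ℕ → β}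
    (h : ∀ n, ∀ i < n, f n i = g i) : Tendsto f atTop (𝓝 g) :=
  tendsto_pi_nhds.2 fun i =>
    tendsto_nhds_of_eventually_eq ((eventually_gt_atTop i).mono fun n hn => h n i hn)

section SectionTree

open Classical in
noncomputable def sectionTree (C : Set ((ℕ → Bool) × (ℕ → ℕ))) (x : ℕ → Bool) (s : List ℕ) : Bool :=
  decide (∃ p ∈ C, initSeg p.2 s.length = s ∧ ∀ i < s.length, p.1 i = x i)

lemma isTree_sectionTree (C : Set ((ℕ → Bool) × (ℕ → ℕ))) (x : ℕ → Bool) :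
    IsTree (sectionTree C x) := by
  intro s a h
  simp only [sectionTree, decide_eq_true_eq, List.length_append, List.length_singleton,
    initSeg_succ] at h ⊢
  obtain ⟨p, hp, hs, hx⟩ := h
  exact ⟨p, hp, List.append_inj_left' hs rfl, fun i hi => hx i (by omega)⟩

lemma continuous_sectionTree (C : Set ((ℕ → Bool) × (ℕ → ℕ))) : Continuous (sectionTree C) := by
  classical
  refine continuous_pi fun s => ?_
  let G : (Fin s.length → Bool) → Bool := fun v =>
    decide (∃ p ∈ C, initSeg p.2 s.length = s ∧ ∀ i : Fin s.length, p.1 i = v i)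
  have hG : (fun x => sectionTree C x s) = G ∘ fun x i => x i := by
    funext x
    simp [G, sectionTree, Fin.forall_iff]
  rw [hG]
  exact continuous_of_discreteTopology.comp (continuous_pi fun i => continuous_apply _)

lemma illFounded_sectionTree_iff {C : Set ((ℕ → Bool) × (ℕ → ℕ))} (hC : IsClosed C) (x : ℕ → Bool) :
    IllFounded (sectionTree C x) ↔ x ∈ Prod.fst '' C := by
  constructor
  · rintro ⟨τ, hτ⟩
    have hwit (n : ℕ) : ∃ p ∈ C, (∀ i < n, p.2 i = τ i) ∧ ∀ i < n, p.1 i = x i := by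
      simpa [sectionTree, initSeg_inj] using hτ n
    choose p hpC hp2 hp1 using hwit
    have hlim : Tendsto p atTop (𝓝 (x, τ)) :=
      (tendsto_pi_of_forall_lt_eq hp1).prodMk_nhds (tendsto_pi_of_forall_lt_eq hp2)
    exact ⟨(x, τ), hC.mem_of_tendsto hlim (.of_forall hpC), rfl⟩
  · rintro ⟨⟨x, τ⟩, hp, rfl⟩
    refine ⟨τ, fun n => ?_⟩
    simpa [sectionTree] using ⟨x, τ, hp, rfl, fun _ _ => rfl⟩

end SectionTree

theorem not_analyticSet_setOf_wellFounded :
    ¬ AnalyticSet {T : List ℕ → Bool | IsTree T ∧ ¬ IllFounded T} := by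
  intro hWF
  obtain ⟨C, hC, hnot⟩ := exists_isClosed_not_analyticSet_compl_image_fst
  refine hnot ?_
  convert hWF.preimage (continuous_sectionTree C)
  ext x
  simp [isTree_sectionTree, illFounded_sectionTree_iff hC]

namespace Hurewicz

/-- `I = (lo, hi)` stands for `[lo, hi]`. With `d = (hi - lo) / 4 ^ (a + 1)`, the disjoint intervals
`[lo + d/4, lo + d/2]` and `[lo + 3d/4, lo + d]` cannot both contain `r`. -/
def child (I : ℚ × ℚ) (r : ℚ) (a : ℕ) : ℚ × ℚ :=
  let d := (I.2 - I.1) / 4 ^ (a + 1)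
  if I.1 + d / 4 ≤ r ∧ r ≤ I.1 + d / 2 then (I.1 + 3 * d / 4, I.1 + d)
  else (I.1 + d / 4, I.1 + d / 2)

lemma child_spec {I : ℚ × ℚ} (hI : I.1 < I.2) (r : ℚ) (a : ℕ) :
    I.1 < (child I r a).1 ∧ (child I r a).1 < (child I r a).2 ∧
      (child I r a).2 ≤ I.1 + (I.2 - I.1) / 4 ^ (a + 1) ∧
      r ∉ Icc (child I r a).1 (child I r a).2 := by
  have hd : 0 < (I.2 - I.1) / 4 ^ (a + 1) := div_pos (sub_pos.2 hI) (by positivity)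
  dsimp only [child]
  split_ifs with h
  · exact ⟨by linarith, by linarith, by linarith, fun hr => by linarith [hr.1, h.2]⟩
  · exact ⟨by linarith, by linarith, by linarith, h⟩

variable (q : ℕ → ℚ)

def schemeFrom (I : ℚ × ℚ) (k : ℕ) : List ℕ → ℚ × ℚ
  | [] => I
  | a :: s => schemeFrom (child I (q k) a) (k + 1) s

def scheme (s : List ℕ) : ℚ × ℚ := schemeFrom q (0, 1) 0 s

def schemeIcc (s : List ℕ) : Set ℝ := Icc ((scheme q s).1 : ℝ) (scheme q s).2

lemma schemeFrom_append_singleton (I : ℚ × ℚ) (k : ℕ) (s : List ℕ) (a : ℕ) :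
    schemeFrom q I k (s ++ [a]) = child (schemeFrom q I k s) (q (k + s.length)) a := by
  induction s generalizing I k with
  | nil => rfl
  | cons b s ih =>
    simp only [List.cons_append, schemeFrom, ih, List.length_cons]
    congr 2
    omega

lemma scheme_append_singleton (s : List ℕ) (a : ℕ) :
    scheme q (s ++ [a]) = child (scheme q s) (q s.length) a := by
  rw [scheme, scheme, schemeFrom_append_singleton, zero_add]

lemma scheme_bounds (s : List ℕ) :
    0 ≤ (scheme q s).1 ∧ (scheme q s).1 < (scheme q s).2 ∧ (scheme q s).2 ≤ 1 := by
  induction s using List.reverseRecOn with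
  | nil => exact ⟨le_rfl, zero_lt_one, le_rfl⟩
  | append_singleton s a ih =>
    obtain ⟨h0, hlt, h1⟩ := ih
    obtain ⟨hlo, hlt', hhi, -⟩ := child_spec hlt (q s.length) a
    have : ((scheme q s).2 - (scheme q s).1) / 4 ^ (a + 1) ≤ (scheme q s).2 - (scheme q s).1 :=
      div_le_self (by linarith) (one_le_pow₀ (by norm_num))
    rw [scheme_append_singleton]
    exact ⟨by linarith, hlt', by linarith⟩

lemma fst_mem_schemeIcc (s : List ℕ) : ((scheme q s).1 : ℝ) ∈ schemeIcc q s :=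
  left_mem_Icc.2 (by exact_mod_cast (scheme_bounds q s).2.1.le)

lemma schemeIcc_append_singleton_subset (s : List ℕ) (a : ℕ) :
    schemeIcc q (s ++ [a]) ⊆
      schemeIcc q s ∩ Icc ((scheme q s).1 : ℝ) ((scheme q s).1 + (1 / 4) ^ (a + 1)) := by
  obtain ⟨h0, hlt, h1⟩ := scheme_bounds q s
  set I := scheme q s
  set J := child I (q s.length) a
  obtain ⟨hlo, -, hhi, -⟩ : I.1 < J.1 ∧ _ := child_spec hlt _ a
  have hd : (I.2 - I.1) / 4 ^ (a + 1) ≤ I.2 - I.1 :=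
    div_le_self (by linarith) (one_le_pow₀ (by norm_num))
  have hd' : (I.2 - I.1) / 4 ^ (a + 1) ≤ (1 / 4) ^ (a + 1) := by
    rw [one_div_pow]
    exact div_le_div_of_nonneg_right (by linarith) (by positivity)
  have hlo' : (I.1 : ℝ) ≤ J.1 := by exact_mod_cast hlo.le
  have hhi₁ : (J.2 : ℝ) ≤ I.2 := by exact_mod_cast (by linarith : J.2 ≤ I.2)
  have hhi₂ : (J.2 : ℝ) ≤ I.1 + (1 / 4) ^ (a + 1) := by
    simpa using (Rat.cast_le (K := ℝ)).2 (by linarith : J.2 ≤ I.1 + (1 / 4) ^ (a + 1))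
  rw [schemeIcc, schemeIcc, scheme_append_singleton]
  exact fun x hx => ⟨⟨hlo'.trans hx.1, hx.2.trans hhi₁⟩, ⟨hlo'.trans hx.1, hx.2.trans hhi₂⟩⟩

lemma notMem_schemeIcc_append_singleton (s : List ℕ) (a : ℕ) :
    ((q s.length : ℚ) : ℝ) ∉ schemeIcc q (s ++ [a]) := by
  have h := (child_spec (scheme_bounds q s).2.1 (q s.length) a).2.2.2
  rw [schemeIcc, scheme_append_singleton]
  rintro ⟨h1, h2⟩
  exact h ⟨by exact_mod_cast h1, by exact_mod_cast h2⟩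

lemma schemeIcc_anti {s t : List ℕ} (h : s <+: t) : schemeIcc q t ⊆ schemeIcc q s := by
  induction t using List.reverseRecOn generalizing s with
  | nil => rw [List.prefix_nil.1 h]
  | append_singleton t a ih =>
    rcases List.prefix_concat_iff.1 h with rfl | h
    · exact subset_rfl
    · exact ((schemeIcc_append_singleton_subset q t a).trans inter_subset_left).trans (ih h)

lemma scheme_fst_le_of_prefix {s t : List ℕ} (h : s <+: t) :
    ((scheme q s).1 : ℝ) ≤ (scheme q t).1 :=
  (schemeIcc_anti q h (fst_mem_schemeIcc q t)).1

lemma schemeIcc_subset_Icc (s : List ℕ) : schemeIcc q s ⊆ Icc 0 1 := by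
  obtain ⟨h0, hlt, h1⟩ := scheme_bounds q s
  exact Icc_subset_Icc (by exact_mod_cast h0) (by exact_mod_cast h1)

noncomputable def schemePoint (s : List ℕ) : Icc (0 : ℝ) 1 :=
  ⟨(scheme q s).1, schemeIcc_subset_Icc q s (fst_mem_schemeIcc q s)⟩

lemma exists_tendsto_mem_schemeIcc (σ : ℕ → ℕ) : ∃ x : ℝ,
    Tendsto (fun n => ((scheme q (initSeg σ n)).1 : ℝ)) atTop (𝓝 x) ∧
      ∀ n, x ∈ schemeIcc q (initSeg σ n) := by
  set lo := fun n => ((scheme q (initSeg σ n)).1 : ℝ)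
  have hmono : Monotone lo := fun m n h => scheme_fst_le_of_prefix q (initSeg_prefix σ h)
  have hle (m n : ℕ) : lo m ≤ (scheme q (initSeg σ n)).2 :=
    (hmono (le_max_left m n)).trans
      (schemeIcc_anti q (initSeg_prefix σ (le_max_right m n)) (fst_mem_schemeIcc q _)).2
  have hbdd : BddAbove (range lo) := ⟨_, forall_mem_range.2 fun m => hle m 0⟩
  exact ⟨⨆ n, lo n, tendsto_atTop_ciSup hmono hbdd,
    fun n => ⟨le_ciSup hbdd n, ciSup_le fun m => hle m n⟩⟩

lemma dist_schemePoint_le {s t : List ℕ} (hts : t <+: s) (A : ℕ)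
    (hA : ∀ a ≤ A, ¬ t ++ [a] <+: s) :
    dist (schemePoint q s) (schemePoint q t) ≤ (1 / 4) ^ (A + 1) := by
  obtain ⟨_ | ⟨a, d⟩, rfl⟩ := hts
  · simp
  have hpre : t ++ [a] <+: t ++ a :: d := ⟨d, by simp⟩
  have hAa : A + 1 ≤ a + 1 := by
    by_contra! h
    exact hA a (by omega) hpre
  have hmem := (schemeIcc_append_singleton_subset q t a
    (schemeIcc_anti q hpre (fst_mem_schemeIcc q _))).2
  have hpos : (0 : ℝ) ≤ (1 / 4) ^ (A + 1) := by positivity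
  rw [Subtype.dist_eq, Real.dist_eq, abs_le]
  refine ⟨by simp only [schemePoint]; linarith [hmem.1], ?_⟩
  calc _ ≤ ((1 : ℝ) / 4) ^ (a + 1) := by simp only [schemePoint]; linarith [hmem.2]
    _ ≤ _ := pow_le_pow_of_le_one (by norm_num) (by norm_num) hAa

noncomputable def treeClosure (T : List ℕ → Bool) : {A : Set (Icc (0 : ℝ) 1) // IsClosed A} :=
  ⟨closure (schemePoint q '' {s | T s = true}), isClosed_closure⟩

lemma measurable_treeClosure :
    @Measurable _ _ _ (effrosSigma (Icc (0 : ℝ) 1)) (treeClosure q) := by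
  refine measurable_generateFrom ?_
  rintro _ ⟨U, hU, rfl⟩
  have : treeClosure q ⁻¹' {A | ((A : Set (Icc (0 : ℝ) 1)) ∩ U).Nonempty} =
      ⋃ s ∈ {s | schemePoint q s ∈ U}, {T | T s = true} := by
    ext T
    rw [mem_preimage, mem_ofPred_eq, treeClosure, closure_inter_open_nonempty_iff hU,
      image_inter_nonempty_iff]
    simp [Set.Nonempty, and_comm]
  rw [this]
  exact .biUnion (to_countable _) fun s _ =>
    (measurableSet_singleton true).preimage (measurable_pi_apply s)

lemma exists_irrational_mem_treeClosure (hq : Function.Surjective q) {T : List ℕ → Bool}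
    (hT : IllFounded T) : ∃ x ∈ (treeClosure q T : Set (Icc (0 : ℝ) 1)), Irrational (x : ℝ) := by
  obtain ⟨σ, hσ⟩ := hT
  obtain ⟨x, hlim, hmem⟩ := exists_tendsto_mem_schemeIcc q σ
  have hirr : Irrational x := by
    rintro ⟨r, hr⟩
    obtain ⟨n, rfl⟩ := hq r
    have hx := hmem (n + 1)
    rw [initSeg_succ] at hx
    exact notMem_schemeIcc_append_singleton q (initSeg σ n) (σ n) (by rwa [length_initSeg, hr])
  refine ⟨⟨x, schemeIcc_subset_Icc q _ (hmem 0)⟩, ?_, hirr⟩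
  exact mem_closure_of_tendsto (tendsto_subtype_rng.2 hlim)
    (.of_forall fun n => ⟨initSeg σ n, hσ n, rfl⟩)

lemma treeClosure_subset_image {T : List ℕ → Bool} (hT : IsTree T) (hwf : ¬ IllFounded T) :
    (treeClosure q T : Set (Icc (0 : ℝ) 1)) ⊆ schemePoint q '' {s | T s = true} := by
  intro y hy
  obtain ⟨u, hu, hlim⟩ := mem_closure_iff_seq_limit.1 hy
  choose s hsT hsu using hu
  obtain ⟨t, hinf, hfin⟩ := hT.exists_infinite_finite hwf hsT
  obtain ⟨k₀, hk₀⟩ := hinf.nonempty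
  refine ⟨t, hT.mem_of_prefix hk₀ (hsT k₀), (eq_of_forall_dist_le fun ε hε => ?_).symm⟩
  obtain ⟨A, hA⟩ := exists_pow_lt_of_lt_one hε (by norm_num : (1 / 4 : ℝ) < 1)
  have hgood : ({k | t <+: s k} \ ⋃ a ∈ Iic A, {k | t ++ [a] <+: s k}).Infinite :=
    hinf.sdiff ((finite_Iic A).biUnion fun a _ => hfin a)
  have hclose : ∃ᶠ k in atTop, dist (u k) (schemePoint q t) ≤ (1 / 4) ^ (A + 1) :=
    Nat.frequently_atTop_iff_infinite.2 <| hgood.mono fun k hk => by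
      rw [mem_ofPred_eq, ← hsu k]
      exact dist_schemePoint_le q hk.1 A fun a ha h => hk.2 (mem_biUnion ha h)
  calc dist y (schemePoint q t) ≤ (1 / 4) ^ (A + 1) :=
        le_of_tendsto_of_frequently (hlim.dist tendsto_const_nhds) hclose
    _ ≤ (1 / 4) ^ A := pow_le_pow_of_le_one (by norm_num) (by norm_num) (by omega)
    _ ≤ ε := hA.le

end Hurewicz

/-- the Hurewicz theorem. -/
theorem hurewicz_souslin_set_containing_compact_subsets_of_rationals
    (𝓐 : Set {A : Set (Icc (0:ℝ) 1) // IsClosed A})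
    (h𝓐 : IsSouslinIn (effrosSigma (Icc (0:ℝ) 1)) 𝓐)
    (hQ : ∀ A : {A : Set (Icc (0:ℝ) 1) // IsClosed A},
      IsCompact (A : Set (Icc (0:ℝ) 1)) →
      (∀ x ∈ (A : Set (Icc (0:ℝ) 1)), ¬ Irrational (x : ℝ)) → A ∈ 𝓐) :
    ∃ A ∈ 𝓐, ∃ x ∈ (A : Set (Icc (0:ℝ) 1)), Irrational (x : ℝ) := by
  by_contra! hrat
  obtain ⟨q, hq⟩ := exists_surjective_nat ℚ
  have hWF : {T : List ℕ → Bool | IsTree T ∧ ¬ IllFounded T} =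
      {T | IsTree T} ∩ Hurewicz.treeClosure q ⁻¹' 𝓐 := by
    ext T
    refine ⟨fun ⟨hT, hwf⟩ => ⟨hT, hQ _ (Hurewicz.treeClosure q T).2.isCompact fun x hx => ?_⟩,
      fun ⟨hT, hA⟩ => ⟨hT, fun hill => ?_⟩⟩
    · obtain ⟨s, -, rfl⟩ := Hurewicz.treeClosure_subset_image q hT hwf hx
      exact fun h => h ⟨_, rfl⟩
    · obtain ⟨x, hx, hirr⟩ := Hurewicz.exists_irrational_mem_treeClosure q hq hill
      exact hrat _ hA x hx hirr
  apply not_analyticSet_setOf_wellFounded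
  rw [hWF]
  exact isClosed_setOf_isTree.analyticSet.inter
    (h𝓐.preimage (Hurewicz.measurable_treeClosure q)).analyticSet
end
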